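/- Let (A,μ,α) be a Hom-alternative algebra. Then as(α(x),α(y),[x,z]) = [as(x,y,z),α²(x)] for all x,y,z ∈ A, where [a,b] = ab − ba. -/
import Mathlib


variable {K A : Type*} [Field K] [CharZero K] [AddCommGroup A] [Module K A]

/-- Hom-associator of a multiplication μ with twisting map α. -/
def homAs (μ : A →ₗ[K] A →ₗ[K] A) (α : A →ₗ[K] A) (x y z : A) : A :=
  μ (μ x y) (α z) - μ (α x) (μ y z)

section helpers
set_option linter.unusedSectionVars false
variable (μ : A →ₗ[K] A →ₗ[K] A) (α : A →ₗ[K] A)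

lemma homAs_add1 (a b y z : A) :
    homAs μ α (a + b) y z = homAs μ α a y z + homAs μ α b y z := by
  simp only [homAs, map_add, LinearMap.add_apply]; abel

lemma homAs_add2 (x a b z : A) :
    homAs μ α x (a + b) z = homAs μ α x a z + homAs μ α x b z := by
  simp only [homAs, map_add, LinearMap.add_apply]; abel

lemma homAs_add3 (x y a b : A) :
    homAs μ α x y (a + b) = homAs μ α x y a + homAs μ α x y b := by
  simp only [homAs, map_add, LinearMap.add_apply]; abel

lemma homAs_sub3 (x y a b : A) :
    homAs μ α x y (a - b) = homAs μ α x y a - homAs μ α x y b := by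
  simp only [homAs, map_sub, LinearMap.sub_apply]; abel

lemma homAs_swap12 (h1 : ∀ x y : A, homAs μ α x x y = 0) (a b c : A) :
    homAs μ α a b c = - homAs μ α b a c := by
  have h := h1 (a + b) c
  rw [homAs_add1, homAs_add2, homAs_add2, h1, h1, zero_add, add_zero] at h
  exact eq_neg_of_add_eq_zero_left h

lemma homAs_swap23 (h2 : ∀ x y : A, homAs μ α x y y = 0) (a b c : A) :
    homAs μ α a b c = - homAs μ α a c b := by
  have h := h2 a (b + c)
  rw [homAs_add2, homAs_add3, homAs_add3, h2, h2, zero_add, add_zero] at h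
  exact eq_neg_of_add_eq_zero_left h

lemma homAs_cyc (h1 : ∀ x y : A, homAs μ α x x y = 0)
    (h2 : ∀ x y : A, homAs μ α x y y = 0) (a b c : A) :
    homAs μ α a b c = homAs μ α c a b := by
  rw [homAs_swap23 μ α h2 a b c, homAs_swap12 μ α h1 a c b, neg_neg]

lemma teich (hmult : ∀ x y : A, α (μ x y) = μ (α x) (α y)) (w x y z : A) :
    homAs μ α (μ w x) (α y) (α z) - homAs μ α (α w) (μ x y) (α z)
      + homAs μ α (α w) (α x) (μ y z)
    = μ (α (α w)) (homAs μ α x y z) + μ (homAs μ α w x y) (α (α z)) := by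
  simp only [homAs, hmult, map_sub, LinearMap.sub_apply]
  abel


lemma E1 (hmult : ∀ x y : A, α (μ x y) = μ (α x) (α y))
    (h1 : ∀ x y : A, homAs μ α x x y = 0)
    (h2 : ∀ x y : A, homAs μ α x y y = 0)
    (h3 : ∀ x y : A, homAs μ α x y x = 0) (x y z : A) :
    homAs μ α (μ x x) (α z) (α y)
      = - homAs μ α (α x) (α y) (μ x z) - μ (α (α x)) (homAs μ α x y z) := by
  have T := teich μ α hmult x x z y
  rw [h1 (α x) (μ z y), h1 x z, homAs_swap23 μ α h2 x z y,
      homAs_swap23 μ α h2 (α x) (μ x z) (α y)] at T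
  simp only [map_zero, LinearMap.zero_apply, map_neg, LinearMap.neg_apply] at T
  linear_combination (norm := abel) T

lemma E2 (hmult : ∀ x y : A, α (μ x y) = μ (α x) (α y))
    (h1 : ∀ x y : A, homAs μ α x x y = 0)
    (h2 : ∀ x y : A, homAs μ α x y y = 0)
    (h3 : ∀ x y : A, homAs μ α x y x = 0) (x y z : A) :
    homAs μ α (μ y x) (α x) (α z) = - μ (α (α x)) (homAs μ α x y z) := by
  have T := teich μ α hmult y x x z
  rw [h1 x z, h2 y x, ← homAs_cyc μ α h1 h2 (μ x x) (α z) (α y),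
      E1 μ α hmult h1 h2 h3 x y z, homAs_swap12 μ α h1 (α y) (α x) (μ x z)] at T
  simp only [map_zero, LinearMap.zero_apply, map_neg, LinearMap.neg_apply] at T
  linear_combination (norm := abel) T

lemma E3 (hmult : ∀ x y : A, α (μ x y) = μ (α x) (α y))
    (h1 : ∀ x y : A, homAs μ α x x y = 0)
    (h2 : ∀ x y : A, homAs μ α x y y = 0)
    (h3 : ∀ x y : A, homAs μ α x y x = 0) (x y z : A) :
    homAs μ α (μ x y) (α x) (α z) = - homAs μ α (α x) (α y) (μ x z) := by
  have T := teich μ α hmult x y x z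
  rw [h3 x y, homAs_swap12 μ α h1 y x z,
      ← homAs_cyc μ α h1 h2 (μ y x) (α z) (α x),
      homAs_swap23 μ α h2 (μ y x) (α z) (α x),
      E2 μ α hmult h1 h2 h3 x y z] at T
  simp only [map_zero, LinearMap.zero_apply, map_neg, LinearMap.neg_apply, neg_neg] at T
  linear_combination (norm := abel) T

lemma E4 (hmult : ∀ x y : A, α (μ x y) = μ (α x) (α y))
    (h1 : ∀ x y : A, homAs μ α x x y = 0)
    (h2 : ∀ x y : A, homAs μ α x y y = 0)
    (h3 : ∀ x y : A, homAs μ α x y x = 0) (x y z : A) :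
    homAs μ α (μ x x) (α y) (α z)
      = homAs μ α (α x) (α y) (μ x z) + μ (α (α x)) (homAs μ α x y z) := by
  have T := teich μ α hmult x x y z
  rw [h1 (α x) (μ y z), h1 x y,
      ← homAs_cyc μ α h1 h2 (μ x y) (α z) (α x),
      homAs_swap23 μ α h2 (μ x y) (α z) (α x),
      E3 μ α hmult h1 h2 h3 x y z] at T
  simp only [map_zero, LinearMap.zero_apply, neg_neg] at T
  linear_combination (norm := abel) T

lemma E5 (hmult : ∀ x y : A, α (μ x y) = μ (α x) (α y))
    (h1 : ∀ x y : A, homAs μ α x x y = 0)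
    (h2 : ∀ x y : A, homAs μ α x y y = 0)
    (h3 : ∀ x y : A, homAs μ α x y x = 0) (x y z : A) :
    homAs μ α (α x) (α y) (μ z x) = μ (α (α x)) (homAs μ α x y z) := by
  have T := teich μ α hmult z x x y
  rw [h1 x y, h2 z x,
      ← homAs_cyc μ α h1 h2 (μ x x) (α y) (α z),
      E4 μ α hmult h1 h2 h3 x y z,
      homAs_cyc μ α h1 h2 (α z) (α x) (μ x y),
      homAs_swap23 μ α h2 (μ x y) (α z) (α x),
      E3 μ α hmult h1 h2 h3 x y z] at T
  simp only [map_zero, LinearMap.zero_apply, neg_neg] at T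
  rw [homAs_cyc μ α h1 h2 (α x) (α y) (μ z x)]
  linear_combination (norm := abel) T

lemma E6 (hmult : ∀ x y : A, α (μ x y) = μ (α x) (α y))
    (h1 : ∀ x y : A, homAs μ α x x y = 0)
    (h2 : ∀ x y : A, homAs μ α x y y = 0)
    (h3 : ∀ x y : A, homAs μ α x y x = 0) (x y z : A) :
    homAs μ α (α x) (α y) (μ x z) = μ (homAs μ α x y z) (α (α x)) := by
  have T := teich μ α hmult x y z x
  rw [h3 (α x) (μ y z), homAs_cyc μ α h1 h2 y z x,
      E5 μ α hmult h1 h2 h3 x y z,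
      homAs_swap23 μ α h2 (μ x y) (α z) (α x),
      E3 μ α hmult h1 h2 h3 x y z] at T
  simp only [neg_neg] at T
  linear_combination (norm := abel) T

end helpers

theorem stmt10 (μ : A →ₗ[K] A →ₗ[K] A) (α : A →ₗ[K] A)
    (hmult : ∀ x y : A, α (μ x y) = μ (α x) (α y))
    (h1 : ∀ x y : A, homAs μ α x x y = 0)
    (h2 : ∀ x y : A, homAs μ α x y y = 0)
    (h3 : ∀ x y : A, homAs μ α x y x = 0) :
    ∀ x y z : A,
      homAs μ α (α x) (α y) (μ x z - μ z x)
        = μ (homAs μ α x y z) (α (α x)) - μ (α (α x)) (homAs μ α x y z) := by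
  intro x y z
  rw [homAs_sub3, E6 μ α hmult h1 h2 h3 x y z, E5 μ α hmult h1 h2 h3 x y z]
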